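/- Let U be a real n × c matrix and V a real c × c matrix, each with orthonormal columns (UᵀU = I and VᵀV = I). Then for every real n × c matrix B, tr(Bᵀ (U Vᵀ)) ≤ ‖B‖_*; that is, pairing with U Vᵀ under the trace inner product is dominated by the trace norm. -/

import Mathlib

open Matrix

/-- The trace norm (nuclear norm) of a real matrix `A`: the trace of the
positive semidefinite square root of `Aᵀ * A`. -/
noncomputable def traceNorm {m n : Type*} [Fintype m] [Fintype n] [DecidableEq n]
    (A : Matrix m n ℝ) : ℝ :=
  ((Matrix.posSemidef_conjTranspose_mul_self A).1.eigenvectorUnitary.1 *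
    diagonal ((√·) ∘ (Matrix.posSemidef_conjTranspose_mul_self A).1.eigenvalues) *
    (star (Matrix.posSemidef_conjTranspose_mul_self A).1.eigenvectorUnitary : Matrix n n ℝ)).trace
/-- If `U` and `V` have orthonormal columns, then for every matrix `B`,
pairing with `U * Vᵀ` under the trace inner product is dominated by the trace
norm: `tr(Bᵀ * (U * Vᵀ)) ≤ ‖B‖_*`. -/
theorem trace_mul_UVt_le_traceNorm {n c : Type*} [Fintype n] [Fintype c]
    [DecidableEq c] (U : Matrix n c ℝ) (V : Matrix c c ℝ)
    (hU : Uᵀ * U = 1)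
    (hV : Vᵀ * V = 1) :
    ∀ B : Matrix n c ℝ, Matrix.trace (Bᵀ * (U * Vᵀ)) ≤ traceNorm B := by
  intro B
  set W : Matrix n c ℝ := U * Vᵀ with hWdef
  have hVV : V * Vᵀ = 1 := mul_eq_one_comm.mp hV
  have hW : Wᵀ * W = 1 := by
    rw [hWdef, Matrix.transpose_mul, Matrix.transpose_transpose]
    simp only [Matrix.mul_assoc]
    rw [← Matrix.mul_assoc Uᵀ, hU, Matrix.one_mul, hVV]
  have hH := Matrix.posSemidef_conjTranspose_mul_self B
  set S : Matrix c c ℝ := hH.1.eigenvectorUnitary.1 *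
    diagonal ((√·) ∘ hH.1.eigenvalues) *
    (star hH.1.eigenvectorUnitary : Matrix c c ℝ) with hSdef
  have hPP : (star hH.1.eigenvectorUnitary : Matrix c c ℝ) * hH.1.eigenvectorUnitary.1 = 1 :=
    Unitary.coe_star_mul_self _
  have hS : S.PosSemidef := by
    rw [hSdef, Matrix.star_eq_conjTranspose]
    apply PosSemidef.mul_mul_conjTranspose_same
    rw [posSemidef_diagonal_iff]
    intro i; exact Real.sqrt_nonneg _
  have hSS : S * S = Bᴴ * B := by
    conv_rhs => rw [hH.1.spectral_theorem, Unitary.conjStarAlgAut_apply]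
    rw [hSdef]
    simp only [Matrix.mul_assoc]
    rw [← Matrix.mul_assoc _ _ (diagonal _ * _), hPP, Matrix.one_mul, ← Matrix.mul_assoc (diagonal _),
      diagonal_mul_diagonal]
    congr 3
    funext i
    simp only [Function.comp_apply]
    exact Real.mul_self_sqrt (hH.eigenvalues_nonneg i)
  have hSherm : S.IsHermitian := hS.1
  set Q : Matrix c c ℝ := (hSherm.eigenvectorUnitary : Matrix c c ℝ) with hQdef
  set d : c → ℝ := hSherm.eigenvalues with hddef
  have hQ1 : star Q * Q = 1 := Matrix.mem_unitaryGroup_iff'.mp hSherm.eigenvectorUnitary.2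
  have hQ2 : Q * star Q = 1 := Matrix.mem_unitaryGroup_iff.mp hSherm.eigenvectorUnitary.2
  have hstarQ : star Q = Qᵀ := by
    rw [Matrix.star_eq_conjTranspose, Matrix.conjTranspose_eq_transpose_of_trivial]
  have hQ1' : Qᵀ * Q = 1 := by rw [← hstarQ]; exact hQ1
  have hQ2' : Q * Qᵀ = 1 := by rw [← hstarQ]; exact hQ2
  have hspec : Qᵀ * S * Q = Matrix.diagonal d := by
    have := hSherm.conjStarAlgAut_star_eigenvectorUnitary
    rw [Unitary.conjStarAlgAut_apply, Unitary.coe_star, star_star, hstarQ] at this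
    simpa using this
  have hdnonneg : ∀ i, 0 ≤ d i := fun i => hS.eigenvalues_nonneg i
  have hBH : Bᴴ = Bᵀ := Matrix.conjTranspose_eq_transpose_of_trivial B
  -- trace of S is the sum of eigenvalues
  have htrS : S.trace = ∑ i, d i := by
    have hSdecomp : S = Q * Matrix.diagonal d * Qᵀ := by
      rw [← hspec]
      simp only [Matrix.mul_assoc]
      rw [hQ2', Matrix.mul_one, ← Matrix.mul_assoc, hQ2', Matrix.one_mul]
    rw [hSdecomp, Matrix.trace_mul_cycle, hQ1', Matrix.one_mul,
      Matrix.trace_diagonal]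
  -- diagonal entries
  have hcol : ∀ (X Y : Matrix n c ℝ) (i : c), (Xᵀ * Y) i i = ∑ j, X j i * Y j i := by
    intro X Y i
    simp [Matrix.mul_apply]
  have hdiagBB : ∀ i, ((B * Q)ᵀ * (B * Q)) i i = d i ^ 2 := by
    intro i
    have hmid : (B * Q)ᵀ * (B * Q) = Matrix.diagonal d * Matrix.diagonal d := by
      rw [← hspec]
      have : (B * Q)ᵀ * (B * Q) = Qᵀ * (S * S) * Q := by
        rw [hSS, hBH, Matrix.transpose_mul]
        simp only [Matrix.mul_assoc]
      rw [this]
      calc Qᵀ * (S * S) * Q = Qᵀ * (S * ((Q * Qᵀ) * S)) * Q := by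
            rw [hQ2', Matrix.one_mul]
      _ = (Qᵀ * S * Q) * (Qᵀ * S * Q) := by simp only [Matrix.mul_assoc]
    rw [hmid, Matrix.diagonal_mul_diagonal, Matrix.diagonal_apply_eq, sq]
  have hdiagWW : ∀ i, ((W * Q)ᵀ * (W * Q)) i i = 1 := by
    intro i
    have hmid : (W * Q)ᵀ * (W * Q) = 1 := by
      rw [Matrix.transpose_mul]
      calc Qᵀ * Wᵀ * (W * Q) = Qᵀ * (Wᵀ * W) * Q := by simp only [Matrix.mul_assoc]
      _ = 1 := by rw [hW, Matrix.mul_one, hQ1']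
    rw [hmid, Matrix.one_apply_eq]
  -- rewrite the trace
  have htr : Matrix.trace (Bᵀ * W) = ∑ i, ∑ j, (B * Q) j i * (W * Q) j i := by
    have h1 : Matrix.trace (Bᵀ * W) = Matrix.trace ((B * Q)ᵀ * (W * Q)) := by
      rw [Matrix.transpose_mul]
      rw [Matrix.mul_assoc Qᵀ]
      rw [Matrix.trace_mul_comm Qᵀ]
      rw [Matrix.mul_assoc, Matrix.mul_assoc, hQ2', Matrix.mul_one]
    rw [h1, Matrix.trace]
    exact Finset.sum_congr rfl fun i _ => hcol _ _ i
  rw [htr]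
  have hstep : ∀ i, ∑ j, (B * Q) j i * (W * Q) j i ≤ d i := by
    intro i
    set t := ∑ j, (B * Q) j i * (W * Q) j i with ht
    have hB2 : ∑ j, ((B * Q) j i) ^ 2 = d i ^ 2 := by
      rw [← hdiagBB i, hcol]
      simp [sq]
    have hW2 : ∑ j, ((W * Q) j i) ^ 2 = 1 := by
      rw [← hdiagWW i, hcol]
      simp [sq]
    have h2 : t ^ 2 ≤ d i ^ 2 := by
      calc t ^ 2 ≤ (∑ j, ((B * Q) j i) ^ 2) * ∑ j, ((W * Q) j i) ^ 2 :=
            Finset.sum_mul_sq_le_sq_mul_sq _ _ _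
      _ = d i ^ 2 := by rw [hB2, hW2, mul_one]
    calc t ≤ |t| := le_abs_self t
    _ = Real.sqrt (t ^ 2) := (Real.sqrt_sq_eq_abs t).symm
    _ ≤ Real.sqrt (d i ^ 2) := Real.sqrt_le_sqrt h2
    _ = d i := Real.sqrt_sq (hdnonneg i)
  calc ∑ i, ∑ j, (B * Q) j i * (W * Q) j i ≤ ∑ i, d i :=
        Finset.sum_le_sum fun i _ => hstep i
  _ = traceNorm B := htrS.symm
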